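/- Orthogonality relations for the b-Weingarten function: For every k ≥ 1 and every 𝔪 ∈ 𝒫_k, the following identity holds in the formal power series ring ℤ[b]⟦X⟧: Wg^(b)(𝔪) = −X · Σ_{i=1}^{2k−2} ω^(b)(𝔪, (i 2k−1)·𝔪) · Wg^(b)((i 2k−1)·𝔪) + X · [{2k−1,2k} ∈ 𝔪] · Wg^(b)(𝔪↓), where [P] is 1 if P holds and 0 otherwise, and Wg^(b) of the empty pair partition equals 1. -/

import Mathlib

open scoped Classical
open MeasureTheory



/-- A pair partition of `{1, …, 2k}`, encoded as an involution of `ℕ` that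
moves exactly the points `1, …, 2k`.  The pairs are the two-element sets `{a, f a}`. -/
structure PairPartition (k : ℕ) where
  f : ℕ → ℕ
  invol : ∀ a, f (f a) = a
  moves : ∀ a, f a ≠ a ↔ (1 ≤ a ∧ a ≤ 2 * k)

namespace PairPartition

/-- The function underlying the identity (trivial) pair partition
`(1 2 | 3 4 | ⋯ | 2k-1 2k)`. -/
def trivFun (k : ℕ) (a : ℕ) : ℕ :=
  if 1 ≤ a ∧ a ≤ 2 * k then (if a % 2 = 1 then a + 1 else a - 1) else a

/-- The identity pair partition `𝔢_k = (1 2 | 3 4 | ⋯ | 2k-1 2k)`. -/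
def triv (k : ℕ) : PairPartition k where
  f := trivFun k
  invol := by intro a; unfold trivFun; split_ifs <;> omega
  moves := by intro a; unfold trivFun; split_ifs <;> omega

theorem ext' {k : ℕ} {m m' : PairPartition k} (h : m.f = m'.f) : m = m' := by
  cases m; cases m'; simpa using h

/-- The action of the transposition `(i j) ∈ S_{2k}` on pair partitions of `{1, …, 2k}`
(defined to do nothing if `i` or `j` lies outside `{1, …, 2k}`). -/
def swapAct {k : ℕ} (i j : ℕ) (m : PairPartition k) : PairPartition k :=
  if h : 1 ≤ i ∧ i ≤ 2 * k ∧ 1 ≤ j ∧ j ≤ 2 * k then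
    { f := fun a => Equiv.swap i j (m.f (Equiv.swap i j a))
      invol := by intro a; simp [m.invol]
      moves := by
        obtain ⟨hi1, hi2, hj1, hj2⟩ := h
        intro a
        have key : ∀ x y : ℕ, Equiv.swap i j x ≠ y ↔ x ≠ Equiv.swap i j y := by
          intro x y
          constructor
          · intro hxy hc; apply hxy; rw [hc]; simp
          · intro hxy hc; apply hxy; rw [← hc]; simp
        rw [key, ← Equiv.swap_apply_self i j a, Equiv.swap_apply_self i j a]
        rw [m.moves (Equiv.swap i j a)]
        rcases eq_or_ne a i with rfl | hai
        · rw [Equiv.swap_apply_left]; omega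
        rcases eq_or_ne a j with rfl | haj
        · rw [Equiv.swap_apply_right]; omega
        · rw [Equiv.swap_apply_of_ne_of_ne hai haj] }
  else m

/-- Removing the pair `{2k-1, 2k}` from a pair partition: the operation `𝔪 ↦ 𝔪↓`
(defined to return the trivial pair partition if `{2k-1, 2k} ∉ 𝔪`). -/
def down {k : ℕ} (m : PairPartition k) : PairPartition (k - 1) :=
  if h : m.f (2 * k - 1) = 2 * k then
    { f := fun a => if a = 2 * k - 1 ∨ a = 2 * k then a else m.f a
      invol := by
        intro a
        by_cases ha : a = 2 * k - 1 ∨ a = 2 * k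
        · simp [ha]
        · have h2k : m.f (2 * k) = 2 * k - 1 := by
            conv_lhs => rw [← h]
            exact m.invol _
          have hne1 : m.f a ≠ 2 * k - 1 := by
            intro hfa
            have h1 : m.f (m.f a) = m.f (2 * k - 1) := by rw [hfa]
            rw [m.invol, h] at h1
            exact ha (Or.inr h1)
          have hne2 : m.f a ≠ 2 * k := by
            intro hfa
            have h1 : m.f (m.f a) = m.f (2 * k) := by rw [hfa]
            rw [m.invol, h2k] at h1
            exact ha (Or.inl h1)
          simp only [if_neg ha, if_neg (not_or.mpr ⟨hne1, hne2⟩), m.invol]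
      moves := by
        intro a
        by_cases ha : a = 2 * k - 1 ∨ a = 2 * k
        · simp only [if_pos ha]
          rcases ha with ha | ha <;> subst ha <;> constructor <;> intro h' <;> first
            | exact absurd rfl h'
            | omega
        · push_neg at ha
          obtain ⟨ha1, ha2⟩ := ha
          simp only [if_neg (not_or.mpr ⟨ha1, ha2⟩)]
          rw [m.moves a]
          omega }
  else triv (k - 1)

/-- A pair partition as a permutation (involution) of `ℕ`. -/
def perm {k : ℕ} (m : PairPartition k) : Equiv.Perm ℕ :=
  Function.Involutive.toPerm m.f m.invol

end PairPartition

namespace PairPartition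

/-- The connected component (cycle) of the multigraph `Γ(𝔪)` containing a vertex `v`:
the orbit of `v` under the group generated by the involutions `𝔢_k` and `𝔪`. -/
def gammaOrbit {k : ℕ} (m : PairPartition k) (v : ℕ) : Set ℕ :=
  MulAction.orbit (Subgroup.closure {(triv k).perm, m.perm} : Subgroup (Equiv.Perm ℕ)) v

/-- The charge function of `Γ(𝔪)`: `charge m v` holds iff `v` receives charge `+`,
i.e. iff `v` is at even distance (in `Γ(𝔪)`) from the largest label of its cycle.
The vertices at even distance from the largest label `M` of a cycle are exactly the
orbit of `M` under the cyclic group generated by `𝔪 ∘ 𝔢_k`. -/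
def charge {k : ℕ} (m : PairPartition k) (v : ℕ) : Prop :=
  v ∈ MulAction.orbit (Subgroup.zpowers (m.perm * (triv k).perm) : Subgroup (Equiv.Perm ℕ))
        (sSup (gammaOrbit m v))

/-- The weight `ω^(b)(𝔪, (i j)·𝔪)` attached to the transposition `(i j)` acting on `𝔪`:
it is `1` if the charges of `i` and `j` in `Γ(𝔪)` agree, and `b` otherwise. -/
noncomputable def omegab {R : Type*} [CommRing R] (b : R) {k : ℕ}
    (m : PairPartition k) (i j : ℕ) : R :=
  if (charge m i ↔ charge m j) then 1 else b

/-- The number of cycles of `Γ(𝔪)` of length `2ℓ`, i.e. the multiplicity of `ℓ`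
in the coset-type `λ(𝔪)` of `𝔪`. -/
noncomputable def cycleCount {k : ℕ} (m : PairPartition k) (ℓ : ℕ) : ℕ :=
  (((Finset.Icc 1 (2 * k)).filter fun a => (gammaOrbit m a).ncard = 2 * ℓ).card) / (2 * ℓ)

/-- Two pair partitions have the same coset-type iff `Γ(𝔪)` and `Γ(𝔪')` have the same
number of cycles of every length. -/
def SameCosetType {k : ℕ} (m m' : PairPartition k) : Prop :=
  ∀ ℓ : ℕ, cycleCount m ℓ = cycleCount m' ℓ

/-- The pair partition `𝔪` has coset-type the multiset `μ` (a partition of `k`,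
presented as the multiset of its parts). -/
def HasCosetType {k : ℕ} (m : PairPartition k) (μ : Multiset ℕ) : Prop :=
  ∀ ℓ : ℕ, 1 ≤ ℓ → μ.count ℓ = cycleCount m ℓ

/-- All lists of length `n` with entries in the finset `S`. -/
def listsLen (S : Finset (ℕ × ℕ)) : ℕ → Finset (List (ℕ × ℕ))
  | 0 => {[]}
  | n + 1 => (S ×ˢ listsLen S n).image fun p => p.1 :: p.2

/-- Apply a sequence `τ = (τ_1, …, τ_r)` of transpositions (each encoded as a pair)
to a pair partition, the rightmost transposition acting first:
`τ_1 ∘ τ_2 ∘ ⋯ ∘ τ_r · 𝔪`. -/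
def applyFacts {k : ℕ} (l : List (ℕ × ℕ)) (m : PairPartition k) : PairPartition k :=
  l.foldr (fun t acc => swapAct t.1 t.2 acc) m

/-- `l` is a monotone factorisation of the pair partition `𝔪 ∈ 𝒫_k`: a sequence of
transpositions `(a_s b_s)` with `a_s < b_s`, all `b_s` odd, `b_1 ≤ b_2 ≤ ⋯ ≤ b_r`,
and `τ_1 ∘ ⋯ ∘ τ_r · 𝔪 = 𝔢_k`. -/
def IsMonoFact {k : ℕ} (m : PairPartition k) (l : List (ℕ × ℕ)) : Prop :=
  (∀ t ∈ l, 1 ≤ t.1 ∧ t.1 < t.2 ∧ t.2 ≤ 2 * k ∧ Odd t.2) ∧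
  List.Pairwise (· ≤ ·) (l.map Prod.snd) ∧
  applyFacts l m = triv k

/-- The hive number of a monotone factorisation: the number of distinct values among
`b_1, …, b_r`. -/
def hive (l : List (ℕ × ℕ)) : ℕ := (l.map Prod.snd).toFinset.card

/-- The flip number of a monotone factorisation `τ` of `𝔪`: the number of indices `s`
with `ω^(b)(𝔪^(s), τ_s · 𝔪^(s)) = b`, where `𝔪^(s) = τ_{s+1} ∘ ⋯ ∘ τ_r · 𝔪`. -/
noncomputable def flip {k : ℕ} (m : PairPartition k) : List (ℕ × ℕ) → ℕ
  | [] => 0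
  | t :: rest =>
      (if (charge (applyFacts rest m) t.1 ↔ charge (applyFacts rest m) t.2) then 0 else 1)
        + flip m rest

/-- The finset of monotone factorisations of `𝔪 ∈ 𝒫_k` of length `r`. -/
noncomputable def monoFinset {k : ℕ} (m : PairPartition k) (r : ℕ) : Finset (List (ℕ × ℕ)) :=
  (listsLen ((Finset.Icc 1 (2 * k)) ×ˢ (Finset.Icc 1 (2 * k))) r).filter fun l => IsMonoFact m l

/-- A sequence of transpositions is connected (relative to level `k`) if together with the
involution `ι = (1 2)(3 4)⋯(2k-1 2k)` it generates a subgroup acting transitively on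
`{1, …, 2k}`. -/
def IsConnectedFact (k : ℕ) (l : List (ℕ × ℕ)) : Prop :=
  ∀ a ∈ Finset.Icc 1 (2 * k), ∀ b ∈ Finset.Icc 1 (2 * k),
    ∃ σ ∈ Subgroup.closure
        ({(triv k).perm} ∪ {p : Equiv.Perm ℕ | ∃ t ∈ l, p = Equiv.swap t.1 t.2}),
      σ a = b

end PairPartition


noncomputable instance matrixMeasurableSpace {N : ℕ} :
    MeasurableSpace (Matrix (Fin N) (Fin N) ℝ) :=
  inferInstanceAs (MeasurableSpace (Fin N → Fin N → ℝ))

/-- The compact group `O(N)` of real orthogonal `N × N` matrices. -/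
abbrev OrthGroup (N : ℕ) := Matrix.orthogonalGroup (Fin N) ℝ

noncomputable instance orthMeasurableSpace {N : ℕ} : MeasurableSpace (OrthGroup N) :=
  borel _

/-- The diagonal matrix `I_{M,N}` whose first `M` diagonal entries are `1` and whose
remaining entries are `0`. -/
def IMN (N M : ℕ) : Matrix (Fin N) (Fin N) ℝ :=
  Matrix.diagonal fun p => if (p : ℕ) < M then (1 : ℝ) else 0

/-- The map `O ↦ O · I_{M,N} · Oᵀ` from `O(N)` onto the space `A(M,N)` of idempotent
real symmetric `N × N` matrices of rank `M`. -/
def grassMap (N M : ℕ) (O : OrthGroup N) : Matrix (Fin N) (Fin N) ℝ :=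
  (O : Matrix (Fin N) (Fin N) ℝ) * IMN N M * Matrix.transpose (O : Matrix (Fin N) (Fin N) ℝ)


/-- The product `A_{i(1)i(2)} A_{i(3)i(4)} ⋯ A_{i(2k-1)i(2k)}` of matrix entries. -/
def prodEntries {N : ℕ} (k : ℕ) (i : ℕ → Fin N) (A : Matrix (Fin N) (Fin N) ℝ) : ℝ :=
  ∏ a ∈ Finset.range k, A (i (2 * a + 1)) (i (2 * a + 2))



open PairPartition


/-- A step in the (`b`- or `bt`-) Weingarten graph: a type-A edge `𝔪 → (i 2k-1)·𝔪`,
a type-B edge `𝔪 → 𝔪↓`, or a type-C edge `𝔪 → ((i 2k-1)·𝔪)↓`. -/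
inductive WStep where
  | A (i : ℕ) : WStep
  | B : WStep
  | C (i : ℕ) : WStep
deriving DecidableEq

/-- `IsPathTo k 𝔪 ρ` holds iff `ρ` is a path in the `bt`-Weingarten graph from the
pair partition `𝔪 ∈ 𝒫_k` to the empty pair partition. -/
def IsPathTo : (k : ℕ) → PairPartition k → List WStep → Prop
  | 0, _, [] => True
  | _ + 1, _, [] => False
  | 0, _, _ :: _ => False
  | k + 1, m, WStep.A i :: ρ =>
      1 ≤ i ∧ i ≤ 2 * (k + 1) - 2 ∧ IsPathTo (k + 1) (swapAct i (2 * (k + 1) - 1) m) ρ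
  | k + 1, m, WStep.B :: ρ =>
      m.f (2 * (k + 1) - 1) = 2 * (k + 1) ∧ IsPathTo k (down m) ρ
  | k + 1, m, WStep.C i :: ρ =>
      1 ≤ i ∧ i ≤ 2 * (k + 1) - 2 ∧ m.f i = 2 * (k + 1) ∧
        IsPathTo k (down (swapAct i (2 * (k + 1) - 1) m)) ρ

/-- The product of the `b`-dependent edge weights along a path. -/
noncomputable def pathWeight {R : Type*} [CommRing R] (b : R) :
    (k : ℕ) → PairPartition k → List WStep → R
  | _, _, [] => 1
  | 0, _, _ :: _ => 1
  | k + 1, m, WStep.A i :: ρ =>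
      omegab b m i (2 * (k + 1) - 1) * pathWeight b (k + 1) (swapAct i (2 * (k + 1) - 1) m) ρ
  | k + 1, m, WStep.B :: ρ => pathWeight b k (down m) ρ
  | k + 1, m, WStep.C i :: ρ => pathWeight b k (down (swapAct i (2 * (k + 1) - 1) m)) ρ

/-- The number of type-A edges of a path. -/
def countA (l : List WStep) : ℕ :=
  (l.filter fun s => match s with | WStep.A _ => true | _ => false).length

/-- The number of type-B edges of a path. -/
def countB (l : List WStep) : ℕ :=
  (l.filter fun s => match s with | WStep.B => true | _ => false).length

/-- The number of type-C edges of a path. -/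
def countC (l : List WStep) : ℕ :=
  (l.filter fun s => match s with | WStep.C _ => true | _ => false).length

/-- The `b`-Weingarten function `Wg^(b)(𝔪) ∈ ℤ[b]⟦X⟧`: the coefficient of `X^n` is the
sum of `(-1)^{ℓ_A(ρ)} w(ρ)` over all paths `ρ` (with no type-C edges, i.e. paths in the
`b`-Weingarten graph) from `𝔪` to the empty pair partition with `ℓ_A(ρ) + ℓ_B(ρ) = n`.
Here `b` is the polynomial variable of `ℤ[b]`. -/
noncomputable def WgB (k : ℕ) (m : PairPartition k) : PowerSeries (Polynomial ℤ) :=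
  PowerSeries.mk fun n =>
    ∑ᶠ (ρ : List WStep)
      (_ : IsPathTo k m ρ ∧ (∀ i, WStep.C i ∉ ρ) ∧ countA ρ + countB ρ = n),
      (-1 : Polynomial ℤ) ^ countA ρ * pathWeight (Polynomial.X : Polynomial ℤ) k m ρ

/-- The `bt`-Weingarten function `Wg^(bt)(𝔪) ∈ (ℤ[b,y])⟦X⟧`: the coefficient of `X^n` is
the sum of `(-1)^{ℓ_A(ρ)} y^{ℓ_B(ρ)} w(ρ)` over all paths `ρ` in the `bt`-Weingarten graph
from `𝔪` to the empty pair partition with `ℓ_A(ρ) + ℓ_C(ρ) = n`.  Here `b = X 0` and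
`y = X 1` in `ℤ[b,y] = MvPolynomial (Fin 2) ℤ`. -/
noncomputable def WgBT (k : ℕ) (m : PairPartition k) :
    PowerSeries (MvPolynomial (Fin 2) ℤ) :=
  PowerSeries.mk fun n =>
    ∑ᶠ (ρ : List WStep) (_ : IsPathTo k m ρ ∧ countA ρ + countC ρ = n),
      (-1 : MvPolynomial (Fin 2) ℤ) ^ countA ρ * (MvPolynomial.X 1) ^ countB ρ *
        pathWeight (MvPolynomial.X 0 : MvPolynomial (Fin 2) ℤ) k m ρ

/-- The standard basis vector `𝔪` of the free module with basis `𝒫_k`,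
realised as functions `𝒫_k → R`. -/
noncomputable def basisVec {R : Type*} [CommRing R] (k : ℕ) (m : PairPartition k) :
    PairPartition k → R :=
  fun n => if n = m then 1 else 0

/-- The `b`-deformed Jucys–Murphy operator `𝒥_i` acting on the free module with basis
`𝒫_k` (realised as functions `𝒫_k → R`): on basis vectors,
`𝒥_i(𝔪) = ∑_{a=1}^{2i-2} ω^(b)((a 2i-1)·𝔪, 𝔪) · (a 2i-1)·𝔪`. -/
noncomputable def JbOp {R : Type*} [CommRing R] (b : R) {k : ℕ} (i : ℕ)
    (v : PairPartition k → R) : PairPartition k → R :=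
  fun n => ∑ a ∈ Finset.Icc 1 (2 * i - 2),
    omegab b n a (2 * i - 1) * v (swapAct a (2 * i - 1) n)

/-- The (odd) Jucys–Murphy element `J_{2i-1} = ∑_{a=1}^{2i-2} (a
 2i-1)` of the group
algebra of `S_{2k}`, acting on the free module with basis `𝒫_k` via the linear extension
of the `S_{2k}`-action on pair partitions. -/
noncomputable def JoddOp {R : Type*} [CommRing R] {k : ℕ} (i : ℕ)
    (v : PairPartition k → R) : PairPartition k → R :=
  fun n => ∑ a ∈ Finset.Icc 1 (2 * i - 2), v (swapAct a (2 * i - 1) n)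

/-- The vector `𝔭_μ = ∑_{𝔪 : λ(𝔪) = μ} 𝔪`, i.e. the indicator function of the set of
pair partitions of coset-type `μ`. -/
noncomputable def pVec {R : Type*} [CommRing R] (k : ℕ) (μ : Multiset ℕ) :
    PairPartition k → R :=
  fun m => if HasCosetType m μ then 1 else 0

noncomputable def applyPows {R : Type*} [CommRing R] (b : R) {k : ℕ} :
    List (ℕ × ℕ) → (PairPartition k → R) → (PairPartition k → R)
  | [], v => v
  | ia :: rest, v => (JbOp b ia.1)^[ia.2] (applyPows b rest v)


/-- The coefficient ring `ℤ[b,y]⟦X⟧`, with `b = X 0` and `y = X 1`. -/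
abbrev SeriesRing := PowerSeries (MvPolynomial (Fin 2) ℤ)

noncomputable def bS : SeriesRing := PowerSeries.C (MvPolynomial.X 0)
noncomputable def yS : SeriesRing := PowerSeries.C (MvPolynomial.X 1)

/-- The operator-valued power series `(1 + X·𝒥_i)⁻¹ = ∑_{j ≥ 0} (-X)^j 𝒥_i^j`
applied to a vector `v`, computed coefficientwise. -/
noncomputable def invApply (k : ℕ) (i : ℕ) (v : PairPartition k → SeriesRing) :
    PairPartition k → SeriesRing :=
  fun n => PowerSeries.mk fun d =>
    ∑ᶠ j : ℕ, PowerSeries.coeff d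
      ((-(PowerSeries.X : SeriesRing)) ^ j * ((JbOp bS i)^[j] v) n)

/-- The vector `(y + X𝒥_j)(1 + X𝒥_j)⁻¹ ⋯ (y + X𝒥_1)(1 + X𝒥_1)⁻¹ (𝔢_k)`. -/
noncomputable def prodVec (k : ℕ) : ℕ → (PairPartition k → SeriesRing)
  | 0 => fun n => if n = triv k then 1 else 0
  | j + 1 => fun n =>
      yS * invApply k (j + 1) (prodVec k j) n +
        PowerSeries.X * (JbOp bS (j + 1) (invApply k (j + 1) (prodVec k j))) n


open MvPolynomial

/-- The formal partial derivative `∂_n = ∂/∂p_n` on the polynomial ring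
`K[p_1, p_2, …]` (the variables being indexed by positive naturals);
junk value `0` for `n = 0`. -/
noncomputable def pd (K : Type*) [CommRing K] (n : ℕ) :
    MvPolynomial ℕ+ K →ₗ[K] MvPolynomial ℕ+ K :=
  if h : 0 < n then (pderiv (⟨n, h⟩ : ℕ+)).toLinearMap else 0

/-- The variable `p_n` of `K[p_1, p_2, …]`; junk value `0` for `n = 0`. -/
noncomputable def pvar (K : Type*) [CommRing K] (n : ℕ) : MvPolynomial ℕ+ K :=
  if h : 0 < n then X ⟨n, h⟩ else 0

section SumOp

variable (K : Type*) [CommRing K]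

lemma sumOp_support_subset (m : ℕ) (f : MvPolynomial ℕ+ K) :
    (Function.support fun i => ((i + m : ℕ) : K) • (pvar K i * pd K (i + m) f)) ⊆
      ((fun i => i + m) ⁻¹' ↑(f.vars.image (fun v : ℕ+ => (v : ℕ)))) := by
  intro i hi
  simp only [Function.mem_support] at hi
  by_contra hmem
  apply hi
  rcases Nat.eq_zero_or_pos (i + m) with h0 | h0
  · have hi0 : i = 0 := by omega
    subst hi0
    simp [pvar]
  · have hnot : (⟨i + m, h0⟩ : ℕ+) ∉ f.vars := by
      intro hv
      apply hmem
      simp only [Set.mem_preimage, Finset.coe_image, Set.mem_image, Finset.mem_coe]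
      exact ⟨⟨i + m, h0⟩, hv, rfl⟩
    have hz : pd K (i + m) f = 0 := by
      rw [show pd K (i + m) = (pderiv (⟨i + m, h0⟩ : ℕ+)).toLinearMap from dif_pos h0]
      have := pderiv_eq_zero_of_notMem_vars (R := K) hnot
      exact this
    rw [hz, mul_zero, smul_zero]

lemma sumOp_support_finite (m : ℕ) (f : MvPolynomial ℕ+ K) :
    (Function.support fun i => ((i + m : ℕ) : K) • (pvar K i * pd K (i + m) f)).Finite := by
  apply Set.Finite.subset _ (sumOp_support_subset K m f)
  apply Set.Finite.preimage
  · exact (add_left_injective m).injOn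
  · exact (f.vars.image (fun v : ℕ+ => (v : ℕ))).finite_toSet

/-- The operator `∑_{i ≥ 1} (i+m) p_i ∂_{i+m}` on `K[p_1, p_2, …]`
(a well-defined linear operator, the sum being locally finite on polynomials). -/
noncomputable def sumOp (m : ℕ) : MvPolynomial ℕ+ K →ₗ[K] MvPolynomial ℕ+ K where
  toFun f := ∑ᶠ i : ℕ, ((i + m : ℕ) : K) • (pvar K i * pd K (i + m) f)
  map_add' x y := by
    have key : ∀ i : ℕ, ((i + m : ℕ) : K) • (pvar K i * pd K (i + m) (x + y)) =
        ((i + m : ℕ) : K) • (pvar K i * pd K (i + m) x) +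
          ((i + m : ℕ) : K) • (pvar K i * pd K (i + m) y) := by
      intro i
      rw [map_add, mul_add, smul_add]
    try dsimp only
    rw [finsum_congr key]
    exact finsum_add_distrib (sumOp_support_finite K m x) (sumOp_support_finite K m y)
  map_smul' c x := by
    have key : ∀ i : ℕ, ((i + m : ℕ) : K) • (pvar K i * pd K (i + m) (c • x)) =
        c • (((i + m : ℕ) : K) • (pvar K i * pd K (i + m) x)) := by
      intro i
      rw [_root_.map_smul, smul_comm]
      congr 1
      rw [mul_smul_comm]
    try dsimp only
    rw [finsum_congr key]
    simp only [RingHom.id_apply]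
    exact (smul_finsum' c (sumOp_support_finite K m x)).symm
end SumOp

/-- The `bt`-deformed Virasoro-type operator `L_m` of Theorem 3.5/4.7, acting on the
polynomial ring `K[p_1, p_2, …]`. -/
noncomputable def Lop (K : Type*) [CommRing K] (b t z hbar : K) (m : ℕ) :
    MvPolynomial ℕ+ K →ₗ[K] MvPolynomial ℕ+ K :=
  (((m : K) * Ring.inverse hbar) • pd K m)
    - (1 + b) • (∑ i ∈ Finset.Ioo 0 m,
        (((i : ℕ) : K) * (((m - i : ℕ)) : K)) • (pd K i ∘ₗ pd K (m - i)))
    - sumOp K m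
    - ((b * (m : K) * ((m - 1 : ℕ) : K)) • pd K m)
    - ((z * Ring.inverse hbar * (t - 1) * ((m - 1 : ℕ) : K)) • pd K (m - 1))
    - (if m = 1 then (z * Ring.inverse hbar * Ring.inverse hbar * Ring.inverse (1 + b)) •
        (LinearMap.id : MvPolynomial ℕ+ K →ₗ[K] MvPolynomial ℕ+ K) else 0)
open PairPartition

/-- `i : {1,…,2k} → {1,…,N}` is admissible for `𝔪`: `{a,b} ∈ 𝔪` implies `i a = i b`. -/
def Admissible {N : ℕ} (k : ℕ) (m : PairPartition k) (i : ℕ → Fin N) : Prop :=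
  ∀ a, 1 ≤ a → a ≤ 2 * k → i (m.f a) = i a

/-- `i : {1,…,2k} → {1,…,N}` is strongly admissible for `𝔪`:
for `a, b ∈ {1,…,2k}`, `i a = i b` holds iff `a = b` or `{a,b} ∈ 𝔪`. -/
def StronglyAdmissible {N : ℕ} (k : ℕ) (m : PairPartition k) (i : ℕ → Fin N) : Prop :=
  ∀ a b, 1 ≤ a → a ≤ 2 * k → 1 ≤ b → b ≤ 2 * k → (i a = i b ↔ (a = b ∨ m.f a = b))

/-- `ĥ^{(t)}_r(𝔪)` evaluated at a real number `t`: the weighted count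
`∑_{τ ∈ Mono(𝔪), ℓ(τ) = r} t^{hive(τ)}`. -/
noncomputable def hiveSum {k : ℕ} (m : PairPartition k) (r : ℕ) (t : ℝ) : ℝ :=
  ∑ l ∈ monoFinset m r, t ^ hive l

/-- The `bt`-monotone count `∑_{τ ∈ Mono(𝔪), ℓ(τ) = r} b^{flip(τ)} t^{hive(τ)}`
in `ℤ[b,t]`, with `b = X 0` and `t = X 1`. -/
noncomputable def btSum {k : ℕ} (m : PairPartition k) (r : ℕ) : MvPolynomial (Fin 2) ℤ :=
  ∑ l ∈ monoFinset m r,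
    (MvPolynomial.X 0 : MvPolynomial (Fin 2) ℤ) ^ (flip m l) *
      (MvPolynomial.X 1) ^ (hive l)

/-- The connected `bt`-monotone count
`∑_{τ ∈ CMono(𝔪), ℓ(τ) = r} b^{flip(τ)} t^{hive(τ)}` in `ℚ[b,t]`,
with `b = X 0` and `t = X 1`. -/
noncomputable def cMonoSum {k : ℕ} (m : PairPartition k) (r : ℕ) : MvPolynomial (Fin 2) ℚ :=
  ∑ l ∈ (monoFinset m r).filter (fun l => IsConnectedFact k l),
    (MvPolynomial.X 0 : MvPolynomial (Fin 2) ℚ) ^ (flip m l) *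
      (MvPolynomial.X 1) ^ (hive l)

/-- The operator `c + J_{2i-1}` on the free module with basis `𝒫_k`. -/
noncomputable def affJoddOp {k : ℕ} (c : ℝ) (i : ℕ) (v : PairPartition k → ℝ) :
    PairPartition k → ℝ :=
  fun n => c * v n + JoddOp i v n

/-! A path of positive length from `𝔪 ∈ 𝒫_{k+1}` to the empty pair partition begins either
with a type-A edge `𝔪 → (i 2k+1)·𝔪`, contributing the factor `-ω^(b)(𝔪, (i 2k+1)·𝔪)`,
or with the type-B edge `𝔪 → 𝔪↓`. Splitting the coefficient of `X^(n+1)` by the first edge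
therefore gives the coefficient of `X^n` of the right-hand side. The splitting is a
decomposition of the set of paths of length `n+1` into disjoint images of sets of paths of
length `n`, all of them finite. -/

def wgPaths (k : ℕ) (m : PairPartition k) (n : ℕ) : Set (List WStep) :=
  {ρ | IsPathTo k m ρ ∧ (∀ i, WStep.C i ∉ ρ) ∧ countA ρ + countB ρ = n}

noncomputable def wgTerm (k : ℕ) (m : PairPartition k) (ρ : List WStep) : Polynomial ℤ :=
  (-1) ^ countA ρ * pathWeight Polynomial.X k m ρ

@[simp] theorem countA_cons_A (i : ℕ) (ρ : List WStep) :
    countA (WStep.A i :: ρ) = countA ρ + 1 := by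
  simp [countA]

@[simp] theorem countA_cons_B (ρ : List WStep) : countA (WStep.B :: ρ) = countA ρ := by
  simp [countA]

@[simp] theorem countB_cons_A (i : ℕ) (ρ : List WStep) :
    countB (WStep.A i :: ρ) = countB ρ := by
  simp [countB]

@[simp] theorem countB_cons_B (ρ : List WStep) : countB (WStep.B :: ρ) = countB ρ + 1 := by
  simp [countB]

theorem coeff_WgB_eq_finsum (k n : ℕ) (m : PairPartition k) :
    PowerSeries.coeff n (WgB k m) = ∑ᶠ ρ ∈ wgPaths k m n, wgTerm k m ρ := by
  rw [WgB, PowerSeries.coeff_mk]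
  rfl

theorem cons_C_notMem_wgPaths (k n i : ℕ) (m : PairPartition k) (ρ : List WStep) :
    WStep.C i :: ρ ∉ wgPaths k m n :=
  fun ⟨_, hC, _⟩ => hC i List.mem_cons_self

theorem wgPaths_zero_subset (m : PairPartition 0) (n : ℕ) : wgPaths 0 m n ⊆ {[]} := by
  rintro (_ | ⟨s, ρ⟩) ⟨hρ, -⟩
  · rfl
  · exact hρ.elim

theorem wgPaths_succ_zero (k : ℕ) (m : PairPartition (k + 1)) : wgPaths (k + 1) m 0 = ∅ := by
  ext (_ | ⟨s, ρ⟩)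
  · simp [wgPaths, IsPathTo]
  · rcases s with i | _ | i
    · simp [wgPaths]
    · simp [wgPaths]
    · simpa using cons_C_notMem_wgPaths _ _ i m ρ

theorem wgPaths_succ_succ (k n : ℕ) (m : PairPartition (k + 1)) :
    wgPaths (k + 1) m (n + 1) =
      (⋃ i ∈ (Finset.Icc 1 (2 * (k + 1) - 2) : Set ℕ),
          List.cons (WStep.A i) '' wgPaths (k + 1) (swapAct i (2 * (k + 1) - 1) m) n) ∪
        if m.f (2 * (k + 1) - 1) = 2 * (k + 1) then List.cons WStep.B '' wgPaths k (down m) n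
        else ∅ := by
  ext (_ | ⟨s, ρ⟩)
  · simp [wgPaths, IsPathTo]
  · rcases s with i | _ | i
    · split_ifs <;> simp +arith [wgPaths, IsPathTo] <;> tauto
    · split_ifs with h <;> simp [wgPaths, IsPathTo, h, ← add_assoc]
    · exact iff_of_false (cons_C_notMem_wgPaths _ _ i m ρ) (by split_ifs <;> simp)

theorem wgPaths_finite : ∀ (k n : ℕ) (m : PairPartition k), (wgPaths k m n).Finite
  | 0, n, m => (Set.finite_singleton []).subset (wgPaths_zero_subset m n)
  | k + 1, 0, m => by rw [wgPaths_succ_zero]; exact Set.finite_empty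
  | k + 1, n + 1, m => by
    rw [wgPaths_succ_succ]
    refine .union (.biUnion (Finset.finite_toSet _) fun i _ => (wgPaths_finite _ _ _).image _) ?_
    split_ifs
    · exact (wgPaths_finite _ _ _).image _
    · exact Set.finite_empty

theorem wgTerm_cons_A (k i : ℕ) (m : PairPartition (k + 1)) (ρ : List WStep) :
    wgTerm (k + 1) m (WStep.A i :: ρ) =
      -omegab Polynomial.X m i (2 * (k + 1) - 1) *
        wgTerm (k + 1) (swapAct i (2 * (k + 1) - 1) m) ρ := by
  simp only [wgTerm, pathWeight, countA_cons_A, pow_succ]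
  ring

theorem wgTerm_cons_B (k : ℕ) (m : PairPartition (k + 1)) (ρ : List WStep) :
    wgTerm (k + 1) m (WStep.B :: ρ) = wgTerm k (down m) ρ := by
  simp only [wgTerm, pathWeight, countA_cons_B]

theorem coeff_succ_WgB (k n : ℕ) (m : PairPartition (k + 1)) :
    PowerSeries.coeff (n + 1) (WgB (k + 1) m) =
      -∑ i ∈ Finset.Icc 1 (2 * (k + 1) - 2), omegab Polynomial.X m i (2 * (k + 1) - 1) *
          PowerSeries.coeff n (WgB (k + 1) (swapAct i (2 * (k + 1) - 1) m)) +
        if m.f (2 * (k + 1) - 1) = 2 * (k + 1) then PowerSeries.coeff n (WgB k (down m))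
        else 0 := by
  have hA_disjoint : (↑(Finset.Icc 1 (2 * (k + 1) - 2)) : Set ℕ).PairwiseDisjoint fun i =>
      List.cons (WStep.A i) '' wgPaths (k + 1) (swapAct i (2 * (k + 1) - 1) m) n := by
    intro i _ j _ hij
    simp only [Function.onFun, Set.disjoint_left]
    rintro _ ⟨ρ, -, rfl⟩ ⟨ρ', -, h⟩
    simp_all
  have hAB_disjoint : Disjoint
      (⋃ i ∈ (Finset.Icc 1 (2 * (k + 1) - 2) : Set ℕ),
        List.cons (WStep.A i) '' wgPaths (k + 1) (swapAct i (2 * (k + 1) - 1) m) n)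
      (if m.f (2 * (k + 1) - 1) = 2 * (k + 1) then List.cons WStep.B '' wgPaths k (down m) n
        else ∅) := by
    split_ifs
    · simp only [Set.disjoint_left, Set.mem_iUnion]
      rintro _ ⟨i, -, ρ, -, rfl⟩ ⟨ρ', -, h⟩
      simp at h
    · exact Set.disjoint_empty _
  obtain ⟨hA_fin, hB_fin⟩ :=
    Set.finite_union.mp (wgPaths_succ_succ k n m ▸ wgPaths_finite _ _ m)
  rw [coeff_WgB_eq_finsum, wgPaths_succ_succ, finsum_mem_union hAB_disjoint hA_fin hB_fin,
    finsum_mem_biUnion hA_disjoint (Finset.finite_toSet _)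
      fun i _ => (wgPaths_finite _ _ _).image _,
    finsum_mem_coe_finset, ← Finset.sum_neg_distrib]
  congr 1
  · refine Finset.sum_congr rfl fun i _ => ?_
    rw [finsum_mem_image List.cons_injective.injOn, coeff_WgB_eq_finsum, ← neg_mul,
      mul_finsum_mem]
    exact finsum_mem_congr rfl fun ρ _ => wgTerm_cons_A k i m ρ
  · split_ifs
    · rw [finsum_mem_image List.cons_injective.injOn, coeff_WgB_eq_finsum]
      exact finsum_mem_congr rfl fun ρ _ => wgTerm_cons_B k m ρ
    · exact finsum_mem_empty

/-- **Orthogonality relations for the `b`-Weingarten function** (Proposition 4.5).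
For every `k ≥ 1` and `𝔪 ∈ 𝒫_k`, in `ℤ[b]⟦X⟧`:
`Wg^(b)(𝔪) = -X ∑_{i=1}^{2k-2} ω^(b)(𝔪,(i 2k-1)·𝔪) Wg^(b)((i 2k-1)·𝔪)
  + X·[{2k-1,2k} ∈ 𝔪]·Wg^(b)(𝔪↓)`. -/
theorem orthogonality_relations_WgB
    (k : ℕ) (hk : 1 ≤ k) (m : PairPartition k) :
    WgB k m =
      -(PowerSeries.X * ∑ i ∈ Finset.Icc 1 (2 * k - 2),
          PowerSeries.C (omegab Polynomial.X m i (2 * k - 1)) *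
            WgB k (swapAct i (2 * k - 1) m))
      + PowerSeries.X *
          (if m.f (2 * k - 1) = 2 * k then WgB (k - 1) (down m) else 0) := by
  obtain ⟨k, rfl⟩ : ∃ k', k = k' + 1 := ⟨k - 1, by omega⟩
  refine PowerSeries.ext fun n => ?_
  rcases n with _ | n
  · rw [coeff_WgB_eq_finsum, wgPaths_succ_zero, finsum_mem_empty, map_add, map_neg,
      PowerSeries.coeff_zero_X_mul, PowerSeries.coeff_zero_X_mul, neg_zero, add_zero]
  · rw [coeff_succ_WgB, map_add, map_neg, PowerSeries.coeff_succ_X_mul,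
      PowerSeries.coeff_succ_X_mul, map_sum, apply_ite (PowerSeries.coeff n), map_zero]
    simp only [PowerSeries.coeff_C_mul]
    -- `WgB (k + 1 - 1) (down m)` and `WgB k (down m)` agree definitionally
    rfl
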